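/- For pointed sets X and X' regarded as trivial partial abelian monoids (with sum defined only when one summand is the basepoint), the product X ⊗ X' is in natural bijection with the smash product X ∧ X': every element of T(X,X') is equivalent to a multiset of cardinality at most 1, and the class of a singleton (x,x') is the basepoint iff x or x' is the basepoint. -/

import Mathlib

/-- Pairwise insummability for the trivial partial abelian monoid on a pointed
set: every two-element sub-multiset is insummable, i.e. has both entries
non-basepoint. -/
def PInsum {A : Type*} (z : A) (s : Multiset A) : Prop :=
  ∀ a b : A, a ::ₘ {b} ≤ s → ¬(a = z ∨ b = z)

/-- Summability of a multiset in the trivial partial abelian monoid: every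
two-element sub-multiset contains the basepoint (equivalently, at most one
entry is non-basepoint). -/
def TrivSumm {A : Type*} (z : A) (s : Multiset A) : Prop :=
  ∀ a b : A, a ::ₘ {b} ≤ s → (a = z ∨ b = z)

/-- The admissible multisets `T(X,X') ⊆ 𝕄(X × X')` for trivial partial abelian
monoids: for every sub-multiset, if one projection is pairwise insummable then
the other is summable. -/
def Adm {X Y : Type*} (x0 : X) (y0 : Y) (σ : Multiset (X × Y)) : Prop :=
  ∀ τ, τ ≤ σ →
    (PInsum x0 (τ.map Prod.fst) → TrivSumm y0 (τ.map Prod.snd)) ∧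
    (PInsum y0 (τ.map Prod.snd) → TrivSumm x0 (τ.map Prod.fst))

/-- The generating relations for `X ⊗ X'` with trivial partial sums: deleting
pairs with a basepoint coordinate, and splitting a (necessarily trivial) sum in
either coordinate. -/
inductive TRel {X Y : Type*} (x0 : X) (y0 : Y) :
    Multiset (X × Y) → Multiset (X × Y) → Prop
  | del (x y σ) : (x = x0 ∨ y = y0) → TRel x0 y0 ((x, y) ::ₘ σ) σ
  | splitL (x y σ) : TRel x0 y0 ((x, y) ::ₘ σ) ((x, y) ::ₘ (x0, y) ::ₘ σ)
  | splitR (x y σ) : TRel x0 y0 ((x, y) ::ₘ σ) ((x, y) ::ₘ (x, y0) ::ₘ σ)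

/-- The least equivalence relation generated by the relations. -/
def Eqv {X Y : Type*} (x0 : X) (y0 : Y) :
    Multiset (X × Y) → Multiset (X × Y) → Prop :=
  Relation.EqvGen (TRel x0 y0)

/-- The product `X ⊗ X'`: admissible multisets modulo the equivalence. -/
def Tensor {X Y : Type*} (x0 : X) (y0 : Y) : Type _ :=
  Quot (fun a b : {σ : Multiset (X × Y) // Adm x0 y0 σ} => Eqv x0 y0 a.1 b.1)

/-- The smash product `X ∧ X' = (X × X')/(X ∨ X')`. -/
def Smash {X Y : Type*} (x0 : X) (y0 : Y) : Type _ :=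
  Quot (fun a b : X × Y =>
    (a.1 = x0 ∨ a.2 = y0) ∧ (b.1 = x0 ∨ b.2 = y0))

/-!
A multiset of pairs is equivalent to its part off the wedge `X ∨ X'`, obtained by deleting every pair
with a basepoint coordinate, and this part is an invariant of the generating relations: deletion only
removes pairs in the wedge, and splitting only adds them. For an admissible multiset it has at most one
element, since two pairs off the wedge have pairwise insummable first coordinates but non-summable
second coordinates. Sending a class to that element (or to the basepoint when there is none) is
inverse to `(x, x') ↦ [{(x, x')}]`.
-/

section

variable {X Y : Type*} {x0 : X} {y0 : Y}

theorem Multiset.card_le_one_of_forall_not_pair_le {α : Type*} {s : Multiset α}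
    (h : ∀ a b, ¬a ::ₘ {b} ≤ s) : Multiset.card s ≤ 1 := by
  obtain rfl | ⟨a, ha⟩ := s.empty_or_exists_mem
  · simp
  obtain ⟨t, rfl⟩ := Multiset.exists_cons_of_mem ha
  obtain rfl | ⟨b, hb⟩ := t.empty_or_exists_mem
  · simp
  obtain ⟨u, rfl⟩ := Multiset.exists_cons_of_mem hb
  exact absurd (by simp) (h a b)

theorem Multiset.not_pair_le_of_card_le_one {α : Type*} {s : Multiset α}
    (hs : Multiset.card s ≤ 1) (a b : α) : ¬a ::ₘ {b} ≤ s := fun hab => by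
  have := Multiset.card_le_card hab
  simp only [Multiset.card_cons, Multiset.card_singleton] at this
  omega

theorem pInsum_of_forall_ne {A : Type*} {z : A} {s : Multiset A} (h : ∀ a ∈ s, a ≠ z) :
    PInsum z s := by
  rintro a b hab (rfl | rfl)
  · exact h a (Multiset.mem_of_le hab (Multiset.mem_cons_self _ _)) rfl
  · exact h b (Multiset.mem_of_le hab (by simp)) rfl

variable (x0 y0) in
def InWedge (p : X × Y) : Prop :=
  p.1 = x0 ∨ p.2 = y0

open Classical in
variable (x0 y0) in
noncomputable def offWedge (σ : Multiset (X × Y)) : Multiset (X × Y) :=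
  σ.filter fun p => ¬InWedge x0 y0 p

open Classical in
theorem offWedge_cons_of_inWedge {p : X × Y} (hp : InWedge x0 y0 p) (σ : Multiset (X × Y)) :
    offWedge x0 y0 (p ::ₘ σ) = offWedge x0 y0 σ :=
  Multiset.filter_cons_of_neg _ (not_not_intro hp)

open Classical in
theorem offWedge_cons_of_not_inWedge {p : X × Y} (hp : ¬InWedge x0 y0 p) (σ : Multiset (X × Y)) :
    offWedge x0 y0 (p ::ₘ σ) = p ::ₘ offWedge x0 y0 σ :=
  Multiset.filter_cons_of_pos _ hp

open Classical in
theorem offWedge_zero : offWedge x0 y0 0 = 0 :=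
  Multiset.filter_zero _

open Classical in
theorem offWedge_le (σ : Multiset (X × Y)) : offWedge x0 y0 σ ≤ σ :=
  Multiset.filter_le _ _

open Classical in
theorem mem_offWedge {p : X × Y} {σ : Multiset (X × Y)} :
    p ∈ offWedge x0 y0 σ ↔ p ∈ σ ∧ ¬InWedge x0 y0 p :=
  Multiset.mem_filter

theorem TRel.offWedge_eq {s t : Multiset (X × Y)} (h : TRel x0 y0 s t) :
    offWedge x0 y0 s = offWedge x0 y0 t := by
  cases h with
  | del x y _ hxy => exact offWedge_cons_of_inWedge (p := (x, y)) hxy _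
  | splitL x y =>
    rw [Multiset.cons_swap, offWedge_cons_of_inWedge (p := (x0, y)) (Or.inl rfl)]
  | splitR x y =>
    rw [Multiset.cons_swap, offWedge_cons_of_inWedge (p := (x, y0)) (Or.inr rfl)]

theorem Eqv.offWedge_eq {s t : Multiset (X × Y)} (h : Eqv x0 y0 s t) :
    offWedge x0 y0 s = offWedge x0 y0 t :=
  (Setoid.ker (offWedge x0 y0)).iseqv.eqvGen_iff.1
    (Relation.EqvGen.mono (fun _ _ => TRel.offWedge_eq) _ _ h)

theorem TRel.cons (p : X × Y) {s t : Multiset (X × Y)} (h : TRel x0 y0 s t) :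
    TRel x0 y0 (p ::ₘ s) (p ::ₘ t) := by
  cases h with
  | del x y _ hxy =>
    rw [Multiset.cons_swap]
    exact TRel.del x y _ hxy
  | splitL x y =>
    rw [Multiset.cons_swap p, Multiset.cons_swap p, Multiset.cons_swap p]
    exact TRel.splitL x y _
  | splitR x y =>
    rw [Multiset.cons_swap p, Multiset.cons_swap p, Multiset.cons_swap p]
    exact TRel.splitR x y _

theorem Eqv.cons (p : X × Y) {s t : Multiset (X × Y)} (h : Eqv x0 y0 s t) :
    Eqv x0 y0 (p ::ₘ s) (p ::ₘ t) := by
  induction h with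
  | rel _ _ h => exact .rel _ _ (h.cons p)
  | refl => exact .refl _
  | symm _ _ _ ih => exact .symm _ _ ih
  | trans _ _ _ _ _ ih₁ ih₂ => exact .trans _ _ _ ih₁ ih₂

theorem eqv_singleton_zero {p : X × Y} (hp : InWedge x0 y0 p) : Eqv x0 y0 {p} 0 :=
  .rel _ _ (TRel.del p.1 p.2 0 hp)

theorem eqv_offWedge (σ : Multiset (X × Y)) : Eqv x0 y0 σ (offWedge x0 y0 σ) := by
  induction σ using Multiset.induction with
  | empty => exact .refl _
  | cons p σ ih =>
    by_cases hp : InWedge x0 y0 p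
    · rw [offWedge_cons_of_inWedge hp]
      exact .trans _ _ _ (.rel _ _ (TRel.del p.1 p.2 σ hp)) ih
    · rw [offWedge_cons_of_not_inWedge hp]
      exact ih.cons p

theorem eqv_singleton_zero_iff {p : X × Y} : Eqv x0 y0 {p} 0 ↔ InWedge x0 y0 p := by
  refine ⟨fun h => ?_, eqv_singleton_zero⟩
  by_contra hp
  have := h.offWedge_eq
  rw [← Multiset.cons_zero, offWedge_cons_of_not_inWedge hp] at this
  exact Multiset.cons_ne_zero this

theorem Adm.inWedge_of_pair_le {σ : Multiset (X × Y)} (h : Adm x0 y0 σ) {a b : X × Y}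
    (hab : a ::ₘ {b} ≤ σ) : InWedge x0 y0 a ∨ InWedge x0 y0 b := by
  by_contra! hne
  simp only [InWedge, not_or] at hne
  have hfst : PInsum x0 ((a ::ₘ {b}).map Prod.fst) :=
    pInsum_of_forall_ne (by simp [hne.1.1, hne.2.1])
  have hsnd := (h _ hab).1 hfst a.2 b.2 (by simp)
  exact hsnd.elim hne.1.2 hne.2.2

theorem Adm.card_offWedge_le_one {σ : Multiset (X × Y)} (h : Adm x0 y0 σ) :
    Multiset.card (offWedge x0 y0 σ) ≤ 1 := by
  refine Multiset.card_le_one_of_forall_not_pair_le fun a b hab => ?_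
  have hoff (c : X × Y) (hc : c ∈ a ::ₘ {b}) : ¬InWedge x0 y0 c :=
    (mem_offWedge.1 (Multiset.mem_of_le hab hc)).2
  rcases h.inWedge_of_pair_le (hab.trans (offWedge_le σ)) with ha | hb
  · exact hoff a (by simp) ha
  · exact hoff b (by simp) hb

theorem adm_singleton (p : X × Y) : Adm x0 y0 {p} := by
  intro τ hτ
  have hτ : Multiset.card τ ≤ 1 := by simpa using Multiset.card_le_card hτ
  exact ⟨fun _ a b hab => (Multiset.not_pair_le_of_card_le_one (by simpa) a b hab).elim,
    fun _ a b hab => (Multiset.not_pair_le_of_card_le_one (by simpa) a b hab).elim⟩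

variable (x0 y0) in
noncomputable def wedgeRep (σ : Multiset (X × Y)) : X × Y :=
  (offWedge x0 y0 σ).toList.headD (x0, y0)

theorem Eqv.wedgeRep_eq {s t : Multiset (X × Y)} (h : Eqv x0 y0 s t) :
    wedgeRep x0 y0 s = wedgeRep x0 y0 t := by
  rw [wedgeRep, wedgeRep, h.offWedge_eq]

theorem Adm.eqv_singleton_wedgeRep {σ : Multiset (X × Y)} (h : Adm x0 y0 σ) :
    Eqv x0 y0 σ {wedgeRep x0 y0 σ} := by
  have hσ := eqv_offWedge (x0 := x0) (y0 := y0) σ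
  rcases Nat.le_one_iff_eq_zero_or_eq_one.1 h.card_offWedge_le_one with h0 | h1
  · rw [Multiset.card_eq_zero] at h0
    rw [h0] at hσ
    rw [wedgeRep, h0, Multiset.toList_zero, List.headD_nil]
    exact .trans _ _ _ hσ (.symm _ _ (eqv_singleton_zero (p := (x0, y0)) (Or.inl rfl)))
  · obtain ⟨p, hp⟩ := Multiset.card_eq_one.1 h1
    rwa [wedgeRep, hp, Multiset.toList_singleton, List.headD_cons, ← hp]

theorem smash_mk_wedgeRep_singleton (p : X × Y) :
    (Quot.mk _ (wedgeRep x0 y0 {p}) : Smash x0 y0) = Quot.mk _ p := by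
  rw [wedgeRep, ← Multiset.cons_zero]
  by_cases hp : InWedge x0 y0 p
  · rw [offWedge_cons_of_inWedge hp, offWedge_zero, Multiset.toList_zero, List.headD_nil]
    exact Quot.sound ⟨Or.inl rfl, hp⟩
  · rw [offWedge_cons_of_not_inWedge hp, offWedge_zero, Multiset.cons_zero, Multiset.toList_singleton,
      List.headD_cons]

variable (x0 y0) in
noncomputable def tensorEquivSmash : Tensor x0 y0 ≃ Smash x0 y0 where
  toFun := Quot.lift (fun σ => Quot.mk _ (wedgeRep x0 y0 σ.1)) fun _ _ h =>
    congrArg _ h.wedgeRep_eq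
  invFun := Quot.lift (fun p => Quot.mk _ ⟨{p}, adm_singleton p⟩) fun _ _ h =>
    Quot.sound (.trans _ _ _ (eqv_singleton_zero h.1) (.symm _ _ (eqv_singleton_zero h.2)))
  left_inv := Quot.ind fun σ => Quot.sound (.symm _ _ σ.2.eqv_singleton_wedgeRep)
  right_inv := Quot.ind smash_mk_wedgeRep_singleton

theorem tensorEquivSmash_mk_singleton (p : X × Y) (h : Adm x0 y0 {p}) :
    tensorEquivSmash x0 y0 (Quot.mk _ ⟨{p}, h⟩) = Quot.mk _ p :=
  smash_mk_wedgeRep_singleton p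

end

/-- For pointed sets `X, X'` with trivial partial sums, `X ⊗ X'` is in natural
bijection with the smash product `X ∧ X'`: every element of `T(X,X')` is
equivalent to a multiset of cardinality at most one, and the class of a
singleton `(x,x')` is the basepoint iff `x` or `x'` is the basepoint. -/
theorem tensor_eq_smash {X Y : Type*} (x0 : X) (y0 : Y) :
    (∀ σ : Multiset (X × Y), Adm x0 y0 σ →
      ∃ τ : Multiset (X × Y), Multiset.card τ ≤ 1 ∧ Eqv x0 y0 σ τ) ∧
    (∀ (x : X) (y : Y), Eqv x0 y0 {(x, y)} 0 ↔ (x = x0 ∨ y = y0)) ∧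
    ∃ e : Tensor x0 y0 ≃ Smash x0 y0,
      ∀ (x : X) (y : Y) (h : Adm x0 y0 ({(x, y)} : Multiset (X × Y))),
        e (Quot.mk _ ⟨{(x, y)}, h⟩) = Quot.mk _ (x, y) :=
  ⟨fun σ h => ⟨_, h.card_offWedge_le_one, eqv_offWedge σ⟩, fun _ _ => eqv_singleton_zero_iff,
    tensorEquivSmash x0 y0, fun x y h => tensorEquivSmash_mk_singleton (x, y) h⟩
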